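/- There is no binary 5-cap. That is, there do not exist functions κ : W → ℝ and τ : W → ℝ such that: (i) κ ≥ 0 everywhere, κ_λ > 0, the support S = {w : κ_w > 0} is finite and prefix-closed (if κ_{vH} > 0 or κ_{vL} > 0 then κ_v > 0); (ii) τ_λ = 0 and τ_{vH} = τ_v + κ_v for all words v; and (iii) with β, π defined recursively by β_λ = π_λ = 0, β_{vL} = β_v + π_v, π_{vL} = κ_v − π_v, β_{vH} = β_v, π_{vH} = κ_v, every word v with κ_v > 0 satisfies the inequalities κ_{vL} ≥ 5(β_v + κ_v) − τ_{vL} ≥ 0 and κ_{vH} ≥ τ_{vL} − τ_v − κ_v ≥ 0. -/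

import Mathlib

/-!
Put `D_v = 5 β_v + 4 κ_v - τ_v`. The inequalities (iii) at a box `v` give `D_v ≥ 0`, and,
by induction from the leaves of the finite support, `D_v ≤ M(κ_v, π_v)` for the piecewise-linear
potential `M = capBound`: bounds of this shape at both children of a box force the bound at the
box itself, by linear arithmetic in each of the finitely many linear pieces. At the root, however,
`D_λ = 4 κ_λ > 37/10 κ_λ = M(κ_λ, 0)`.
-/

/-- The two letters of binary words: `H` (high supporter) and `L` (low
supporter). -/
inductive Letter : Type
  | H : Letter
  | L : Letter
deriving DecidableEq

/-- Binary words.  The empty list is the empty word `λ`; the word `vH`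
(resp. `vL`) is represented by `Letter.H :: v` (resp. `Letter.L :: v`). -/
abbrev Word : Type := List Letter

/-- The penalty `π`, defined recursively from the heights `κ` by `π_λ = 0`,
`π_{vH} = κ_v` and `π_{vL} = κ_v - π_v`. -/
def pen (κ : Word → ℝ) : Word → ℝ
  | [] => 0
  | Letter.H :: v => κ v
  | Letter.L :: v => κ v - pen κ v

/-- The quantity `β` (weight above the cone minus own height), defined
recursively by `β_λ = 0`, `β_{vH} = β_v` and `β_{vL} = β_v + π_v`. -/
def wt (κ : Word → ℝ) : Word → ℝ
  | [] => 0
  | Letter.H :: v => wt κ v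
  | Letter.L :: v => wt κ v + pen κ v

theorem Set.Finite.induction_on_extensions {α : Type*} {S : Set (List α)} (hS : S.Finite)
    {P : List α → Prop} (step : ∀ v ∈ S, (∀ a, a :: v ∈ S → P (a :: v)) → P v) :
    ∀ v ∈ S, P v := by
  obtain ⟨N, hN⟩ := (hS.image List.length).bddAbove
  suffices ∀ m : ℕ, ∀ v ∈ S, N < v.length + m → P v from fun v hv => this (N + 1) v hv (by omega)
  intro m
  induction m with
  | zero => exact fun v hv hlen => absurd (hN ⟨v, hv, rfl⟩) (by omega)
  | succ m ih =>
    exact fun v hv _ => step v hv fun a ha => ih _ ha (by simp only [List.length_cons]; omega)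

noncomputable def capBound (x y : ℝ) : ℝ :=
  max (max (max (37/10 * x - 15/4 * y) (33/10 * x - 2 * y)) (3 * x - y)) (21/10 * x)

lemma le_capBound_iff {z x y : ℝ} : z ≤ capBound x y ↔
    z ≤ 37/10 * x - 15/4 * y ∨ z ≤ 33/10 * x - 2 * y ∨ z ≤ 3 * x - y ∨ z ≤ 21/10 * x := by
  simp only [capBound, le_max_iff, or_assoc]

lemma capBound_zero_lt {x : ℝ} (hx : 0 < x) : capBound x 0 < 4 * x := by
  simp only [capBound, max_lt_iff]
  refine ⟨⟨⟨?_, ?_⟩, ?_⟩, ?_⟩ <;> linarith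

/-- Here `k, p, b, t` stand for `κ_v, π_v, β_v, τ_v` and `tL, kH, kL` for `τ_{vL}, κ_{vH}, κ_{vL}`;
the children have `β_{vH} = b`, `τ_{vH} = t + k`, `β_{vL} = b + p`, `π_{vH} = k`, `π_{vL} = k - p`. -/
lemma le_capBound_of_children {k p b t tL kH kL : ℝ} (hk : 0 ≤ k) (hkH : 0 ≤ kH) (hkL : 0 ≤ kL)
    (hkL_ge : 5 * (b + k) - tL ≤ kL) (hkH_ge : tL - t - k ≤ kH)
    (hH : 0 < kH → 0 ≤ 5 * b + 4 * kH - (t + k) ∧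
      5 * b + 4 * kH - (t + k) ≤ capBound kH k)
    (hL : 0 < kL → 0 ≤ 5 * (b + p) + 4 * kL - tL ∧
      5 * (b + p) + 4 * kL - tL ≤ capBound kL (k - p)) :
    5 * b + 4 * k - t ≤ capBound k p := by
  simp only [le_capBound_iff] at hH hL ⊢
  by_contra! hgt
  obtain ⟨g1, g2, g3, g4⟩ := hgt
  rcases hkH.eq_or_lt.imp_right hH with hH0 | ⟨hDH, hcH | hcH | hcH | hcH⟩ <;>
  rcases hkL.eq_or_lt.imp_right hL with hL0 | ⟨hDL, hcL | hcL | hcL | hcL⟩ <;>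
  linarith

def capExcess (κ τ : Word → ℝ) (v : Word) : ℝ :=
  5 * wt κ v + 4 * κ v - τ v

section

variable {κ τ : Word → ℝ}

lemma capExcess_cons_H (hτH : ∀ v : Word, τ (Letter.H :: v) = τ v + κ v) (v : Word) :
    capExcess κ τ (Letter.H :: v) = 5 * wt κ v + 4 * κ (Letter.H :: v) - (τ v + κ v) := by
  simp only [capExcess, wt, hτH]

lemma capExcess_le_capBound (hκ : ∀ w : Word, 0 ≤ κ w) (hfin : {w : Word | 0 < κ w}.Finite)
    (hτH : ∀ v : Word, τ (Letter.H :: v) = τ v + κ v)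
    (hbox : ∀ v : Word, 0 < κ v →
      5 * (wt κ v + κ v) - τ (Letter.L :: v) ≤ κ (Letter.L :: v) ∧
      0 ≤ 5 * (wt κ v + κ v) - τ (Letter.L :: v) ∧
      τ (Letter.L :: v) - τ v - κ v ≤ κ (Letter.H :: v) ∧
      0 ≤ τ (Letter.L :: v) - τ v - κ v) :
    ∀ v : Word, 0 < κ v → capExcess κ τ v ≤ capBound (κ v) (pen κ v) := by
  have nonneg : ∀ v : Word, 0 < κ v → 0 ≤ capExcess κ τ v := fun v hv => by
    obtain ⟨-, h2, -, h4⟩ := hbox v hv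
    unfold capExcess
    linarith
  refine hfin.induction_on_extensions fun v hv ih => ?_
  obtain ⟨hkL_ge, -, hkH_ge, -⟩ := hbox v hv
  refine le_capBound_of_children hv.le (hκ _) (hκ _) hkL_ge hkH_ge (fun hH => ?_)
    (fun hL => ⟨nonneg _ hL, ih _ hL⟩)
  rw [← capExcess_cons_H hτH]
  exact ⟨nonneg _ hH, ih _ hH⟩

end

/-- **There is no binary `5`-cap.**  There are no functions `κ, τ : W → ℝ`
such that: (i) `κ ≥ 0`, `κ_λ > 0`, the support of `κ` is finite and
prefix-closed; (ii) `τ_λ = 0` and `τ_{vH} = τ_v + κ_v`; and (iii) every box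
`v` (i.e. `κ_v > 0`) satisfies `κ_{vL} ≥ 5(β_v + κ_v) - τ_{vL} ≥ 0` and
`κ_{vH} ≥ τ_{vL} - τ_v - κ_v ≥ 0`. -/
theorem no_binary_five_cap :
    ¬ ∃ (κ τ : Word → ℝ),
      (∀ w : Word, 0 ≤ κ w) ∧
      0 < κ [] ∧
      {w : Word | 0 < κ w}.Finite ∧
      (∀ v : Word, 0 < κ (Letter.H :: v) ∨ 0 < κ (Letter.L :: v) → 0 < κ v) ∧
      τ [] = 0 ∧
      (∀ v : Word, τ (Letter.H :: v) = τ v + κ v) ∧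
      (∀ v : Word, 0 < κ v →
        5 * (wt κ v + κ v) - τ (Letter.L :: v) ≤ κ (Letter.L :: v) ∧
        0 ≤ 5 * (wt κ v + κ v) - τ (Letter.L :: v) ∧
        τ (Letter.L :: v) - τ v - κ v ≤ κ (Letter.H :: v) ∧
        0 ≤ τ (Letter.L :: v) - τ v - κ v) := by
  rintro ⟨κ, τ, hκ, hroot, hfin, -, hτ0, hτH, hbox⟩
  have hD := capExcess_le_capBound hκ hfin hτH hbox [] hroot
  have hD_root : capExcess κ τ [] = 4 * κ [] := by simp [capExcess, wt, hτ0]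
  rw [hD_root] at hD
  exact (capBound_zero_lt hroot).not_ge hD
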